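/- In the fiber product ring R = ℤ ×_{ℤ/2ℤ} ℤ = {(a,b) ∈ ℤ × ℤ : a ≡ b mod 2}, the ideal 𝔠 = {(a,b) ∈ ℤ² : a,b ∈ 2ℤ} is not a principal ideal of R, and satisfies 𝔠² = (2,2)·𝔠. -/

import Mathlib

/-- The fiber product ring `ℤ ×_{ℤ/2ℤ} ℤ = {(a,b) ∈ ℤ × ℤ : a ≡ b mod 2}`,
as a subring of `ℤ × ℤ`. -/
def fiberProdSubring : Subring (ℤ × ℤ) where
  carrier := {p | 2 ∣ p.1 - p.2}
  zero_mem' := ⟨0, by simp⟩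
  one_mem' := ⟨0, by simp⟩
  add_mem' := by
    rintro ⟨a, b⟩ ⟨c, d⟩ ⟨k, hk⟩ ⟨m, hm⟩
    exact ⟨k + m, by simp only [Prod.mk_add_mk]; linarith⟩
  neg_mem' := by
    rintro ⟨a, b⟩ ⟨k, hk⟩
    exact ⟨-k, by simp only [Prod.neg_mk]; linarith⟩
  mul_mem' := by
    rintro ⟨a, b⟩ ⟨c, d⟩ ⟨k, hk⟩ ⟨m, hm⟩
    exact ⟨a * m + d * k, by simp only [Prod.mk_mul_mk]; linear_combination a * hm + d * hk⟩

/-!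
A generator `g` of `𝔠` would divide `(2, 0)` and `(0, 2)`. The second forces `g.2 ≠ 0`, so the
cofactor of `(2, 0)` has second coordinate `0`; lying in `R`, it then has an even first coordinate,
and `g.1` even would give `4 ∣ 2`. For the product, `(2a, 2b) * (2c, 2d) = 2 * (2ac, 2bd)` with
`(2ac, 2bd) ∈ 𝔠`, and `(2, 2)` is just `2` in `R`.
-/

namespace fiberProdSubring

theorem mem_iff {p : ℤ × ℤ} : p ∈ fiberProdSubring ↔ 2 ∣ p.1 - p.2 := Iff.rfl

def twoZero : fiberProdSubring := ⟨(2, 0), 1, by norm_num⟩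

def zeroTwo : fiberProdSubring := ⟨(0, 2), -1, by norm_num⟩

theorem not_two_dvd_fst_of_dvd_twoZero_of_dvd_zeroTwo {g : fiberProdSubring} (h₁ : g ∣ twoZero)
    (h₂ : g ∣ zeroTwo) : ¬ 2 ∣ (g : ℤ × ℤ).1 := by
  obtain ⟨⟨⟨r₁, r₂⟩, hr⟩, hgr⟩ := h₁
  obtain ⟨⟨⟨_, s₂⟩, _⟩, hgs⟩ := h₂
  have hr₁ : 2 = (g : ℤ × ℤ).1 * r₁ := congrArg (fun x : fiberProdSubring ↦ (x : ℤ × ℤ).1) hgr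
  have hr₂' : 0 = (g : ℤ × ℤ).2 * r₂ := congrArg (fun x : fiberProdSubring ↦ (x : ℤ × ℤ).2) hgr
  have hs₂ : 2 = (g : ℤ × ℤ).2 * s₂ := congrArg (fun x : fiberProdSubring ↦ (x : ℤ × ℤ).2) hgs
  have hg₂ : (g : ℤ × ℤ).2 ≠ 0 := by rintro h; simp [h] at hs₂
  have hr₂ : r₂ = 0 := (mul_eq_zero.mp hr₂'.symm).resolve_left hg₂
  have hr₁_even : 2 ∣ r₁ := by simpa [hr₂] using mem_iff.1 hr
  intro hg₁
  have : (4 : ℤ) ∣ 2 := hr₁ ▸ mul_dvd_mul hg₁ hr₁_even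
  omega

theorem exists_mul_eq_two_mul {x y : fiberProdSubring}
    (hx : 2 ∣ (x : ℤ × ℤ).1 ∧ 2 ∣ (x : ℤ × ℤ).2) (hy : 2 ∣ (y : ℤ × ℤ).1 ∧ 2 ∣ (y : ℤ × ℤ).2) :
    ∃ z : fiberProdSubring, (2 ∣ (z : ℤ × ℤ).1 ∧ 2 ∣ (z : ℤ × ℤ).2) ∧ x * y = 2 * z := by
  obtain ⟨⟨a, ha⟩, ⟨b, hb⟩⟩ := hx
  obtain ⟨⟨c, hc⟩, ⟨d, hd⟩⟩ := hy
  refine ⟨⟨(2 * a * c, 2 * b * d), a * c - b * d, by ring⟩, ⟨⟨a * c, by ring⟩, ⟨b * d, by ring⟩⟩, ?_⟩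
  ext
  · show (x : ℤ × ℤ).1 * (y : ℤ × ℤ).1 = 2 * (2 * a * c)
    rw [ha, hc]; ring
  · show (x : ℤ × ℤ).2 * (y : ℤ × ℤ).2 = 2 * (2 * b * d)
    rw [hb, hd]; ring

end fiberProdSubring

open fiberProdSubring in
/-- In the fiber product ring `R = ℤ ×_{ℤ/2ℤ} ℤ`, the ideal
`𝔠 = {(a,b) ∈ ℤ² : a, b ∈ 2ℤ}` is not principal, and satisfies `𝔠² = (2,2)·𝔠`. -/
theorem stmt12 (𝔠 : Ideal fiberProdSubring)
    (h𝔠 : ∀ x : fiberProdSubring, x ∈ 𝔠 ↔ 2 ∣ (x : ℤ × ℤ).1 ∧ 2 ∣ (x : ℤ × ℤ).2) :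
    ¬ 𝔠.IsPrincipal ∧
      𝔠 * 𝔠 = Ideal.span {(⟨(2, 2), ⟨0, by ring⟩⟩ : fiberProdSubring)} * 𝔠 := by
  have two_eq : (⟨(2, 2), ⟨0, by ring⟩⟩ : fiberProdSubring) = 2 := rfl
  rw [two_eq]
  refine ⟨?_, le_antisymm ?_ (Ideal.mul_mono_left ?_)⟩
  · rintro ⟨g, hg⟩
    have hdvd (x : fiberProdSubring) (hx : x ∈ 𝔠) : g ∣ x := by
      rw [hg] at hx
      exact Ideal.mem_span_singleton.1 hx
    have hg_mem : g ∈ 𝔠 := hg ▸ Ideal.mem_span_singleton_self g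
    exact not_two_dvd_fst_of_dvd_twoZero_of_dvd_zeroTwo
      (hdvd _ ((h𝔠 _).2 ⟨⟨1, rfl⟩, ⟨0, rfl⟩⟩)) (hdvd _ ((h𝔠 _).2 ⟨⟨0, rfl⟩, ⟨1, rfl⟩⟩))
      ((h𝔠 g).1 hg_mem).1
  · rw [Ideal.mul_le]
    intro x hx y hy
    obtain ⟨z, hz, hxy⟩ := exists_mul_eq_two_mul ((h𝔠 x).1 hx) ((h𝔠 y).1 hy)
    exact hxy ▸ Ideal.mul_mem_mul (Ideal.mem_span_singleton_self 2) ((h𝔠 z).2 hz)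
  · rw [Ideal.span_singleton_le_iff_mem, h𝔠]
    exact ⟨dvd_refl _, dvd_refl _⟩
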